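/- arXiv:2010.03890 — 4 statements merged into one kernel-verified Lean document; each statement's English description precedes it below -/
import Mathlib

section
/- Let 𝒜 ⊆ M(N,M) and ℬ ⊆ M(M,N) be bounded sets of matrices. Suppose every sequence (A_n) with values in 𝒜 is ℬ-right-bounded, i.e., for each such sequence there exist a sequence (B_n) with values in ℬ and a constant C such that ‖A_n B_n ⋯ A_1 B_1‖ ≤ C for all n. Then every sequence (A_n) with values in 𝒜 is also ℬ-left-bounded, i.e., there exist (B_n) in ℬ and a constant C̃ with ‖B_n A_n ⋯ B_1 A_1‖ ≤ C̃ for all n. -/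
attribute [local instance] Matrix.linftyOpNormedAddCommGroup Matrix.linftyOpNormedRing

/-- `prodAB A B n = (A n * B n) * ⋯ * (A 1 * B 1)`, with `prodAB A B 0 = 1`. -/
def prodAB {N M : ℕ} (A : ℕ → Matrix (Fin N) (Fin M) ℝ)
    (B : ℕ → Matrix (Fin M) (Fin N) ℝ) : ℕ → Matrix (Fin N) (Fin N) ℝ
  | 0 => 1
  | n + 1 => A (n + 1) * B (n + 1) * prodAB A B n

/-- `prodBA A B n = (B n * A n) * ⋯ * (B 1 * A 1)`, with `prodBA A B 0 = 1`. -/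
def prodBA {N M : ℕ} (A : ℕ → Matrix (Fin N) (Fin M) ℝ)
    (B : ℕ → Matrix (Fin M) (Fin N) ℝ) : ℕ → Matrix (Fin M) (Fin M) ℝ
  | 0 => 1
  | n + 1 => B (n + 1) * A (n + 1) * prodBA A B n

/-- If `𝒜`, `ℬ` are bounded sets of matrices and every sequence with values in
`𝒜` is `ℬ`-right-bounded, then every sequence with values in `𝒜` is also
`ℬ`-left-bounded. -/
theorem stmt6 {N M : ℕ}
    (𝒜 : Set (Matrix (Fin N) (Fin M) ℝ)) (ℬ : Set (Matrix (Fin M) (Fin N) ℝ))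
    (hAbd : ∃ a : ℝ, ∀ A ∈ 𝒜, ‖A‖ ≤ a) (hBbd : ∃ b : ℝ, ∀ B ∈ ℬ, ‖B‖ ≤ b)
    (hright : ∀ A : ℕ → Matrix (Fin N) (Fin M) ℝ, (∀ n, A n ∈ 𝒜) →
      ∃ B : ℕ → Matrix (Fin M) (Fin N) ℝ, (∀ n, B n ∈ ℬ) ∧
        ∃ C : ℝ, 0 < C ∧ ∀ n, 1 ≤ n → ‖prodAB A B n‖ ≤ C) :
    ∀ A : ℕ → Matrix (Fin N) (Fin M) ℝ, (∀ n, A n ∈ 𝒜) →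
      ∃ B : ℕ → Matrix (Fin M) (Fin N) ℝ, (∀ n, B n ∈ ℬ) ∧
        ∃ C : ℝ, 0 < C ∧ ∀ n, 1 ≤ n → ‖prodBA A B n‖ ≤ C := by
  intro A hA
  obtain ⟨a, ha⟩ := hAbd
  obtain ⟨b, hb⟩ := hBbd
  set A' : ℕ → Matrix (Fin N) (Fin M) ℝ := fun k => A (k + 1) with hA'
  obtain ⟨B, hB, C, hC, hCb⟩ := hright A' (fun n => hA (n + 1))
  -- key identity: A (n+1) * prodBA A B n = prodAB A' B n * A 1
  have key : ∀ n, A (n + 1) * prodBA A B n = prodAB A' B n * A 1 := by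
    intro n
    induction n with
    | zero => simp [prodBA, prodAB]
    | succ n ih =>
      calc A (n + 2) * prodBA A B (n + 1)
          = A' (n + 1) * B (n + 1) * (A (n + 1) * prodBA A B n) := by
            simp only [prodBA, hA']; ring_nf; rw [Matrix.mul_assoc, Matrix.mul_assoc]
        _ = A' (n + 1) * B (n + 1) * (prodAB A' B n * A 1) := by rw [ih]
        _ = prodAB A' B (n + 1) * A 1 := by simp only [prodAB, Matrix.mul_assoc]
  have hK : ∀ n, ‖prodAB A' B n‖ ≤ max C ‖(1 : Matrix (Fin N) (Fin N) ℝ)‖ := by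
    intro n
    cases n with
    | zero => exact le_max_right _ _
    | succ n => exact le_trans (hCb (n + 1) (Nat.le_add_left 1 n)) (le_max_left _ _)
  refine ⟨B, hB, max (b * max C ‖(1 : Matrix (Fin N) (Fin N) ℝ)‖ * a) 1, lt_of_lt_of_le one_pos (le_max_right _ _), ?_⟩
  intro n hn
  obtain ⟨m, rfl⟩ : ∃ m, n = m + 1 := ⟨n - 1, (Nat.succ_pred_eq_of_pos hn).symm⟩
  have h1 : prodBA A B (m + 1) = B (m + 1) * (prodAB A' B m * A 1) := by
    show B (m + 1) * A (m + 1) * prodBA A B m = _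
    rw [Matrix.mul_assoc, key]
  rw [h1]
  have hb' : ‖B (m + 1)‖ ≤ b := hb _ (hB _)
  have ha' : ‖A 1‖ ≤ a := ha _ (hA 1)
  refine le_trans ?_ (le_max_left _ 1)
  calc ‖B (m + 1) * (prodAB A' B m * A 1)‖
      ≤ ‖B (m + 1)‖ * ‖prodAB A' B m * A 1‖ := Matrix.linfty_opNorm_mul _ _
    _ ≤ ‖B (m + 1)‖ * (‖prodAB A' B m‖ * ‖A 1‖) := by
        gcongr; exact Matrix.linfty_opNorm_mul _ _
    _ ≤ b * (max C ‖(1 : Matrix (Fin N) (Fin N) ℝ)‖ * a) := by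
        gcongr
        exacts [le_trans (norm_nonneg _) hb', hK m]
    _ = b * max C ‖(1 : Matrix (Fin N) (Fin N) ℝ)‖ * a := by ring
end

section
/- Let 𝒜 ⊆ M(N,M) and ℬ ⊆ M(M,N) be bounded sets of matrices such that every sequence with values in 𝒜 is ℬ-left-bounded. Then every sequence with values in 𝒜 is ℬ-right-bounded. -/
attribute [local instance] Matrix.linftyOpNormedAddCommGroup Matrix.linftyOpNormedRing

/-- If `𝒜`, `ℬ` are bounded sets of matrices and every sequence with values in
`𝒜` is `ℬ`-left-bounded, then every sequence with values in `𝒜` is also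
`ℬ`-right-bounded. -/
theorem stmt7 {N M : ℕ}
    (𝒜 : Set (Matrix (Fin N) (Fin M) ℝ)) (ℬ : Set (Matrix (Fin M) (Fin N) ℝ))
    (hAbd : ∃ a : ℝ, ∀ A ∈ 𝒜, ‖A‖ ≤ a) (hBbd : ∃ b : ℝ, ∀ B ∈ ℬ, ‖B‖ ≤ b)
    (hleft : ∀ A : ℕ → Matrix (Fin N) (Fin M) ℝ, (∀ n, A n ∈ 𝒜) →
      ∃ B : ℕ → Matrix (Fin M) (Fin N) ℝ, (∀ n, B n ∈ ℬ) ∧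
        ∃ C : ℝ, 0 < C ∧ ∀ n, 1 ≤ n → ‖prodBA A B n‖ ≤ C) :
    ∀ A : ℕ → Matrix (Fin N) (Fin M) ℝ, (∀ n, A n ∈ 𝒜) →
      ∃ B : ℕ → Matrix (Fin M) (Fin N) ℝ, (∀ n, B n ∈ ℬ) ∧
        ∃ C : ℝ, 0 < C ∧ ∀ n, 1 ≤ n → ‖prodAB A B n‖ ≤ C := by
  intro A hA
  obtain ⟨a, ha⟩ := hAbd
  obtain ⟨b, hb⟩ := hBbd
  obtain ⟨B', hB', C, hC, hbound⟩ := hleft A hA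
  refine ⟨fun j => B' (j - 1), fun n => hB' _, ?_⟩
  set c1 : ℝ := ‖(1 : Matrix (Fin M) (Fin M) ℝ)‖ with hc1
  have key : ∀ m : ℕ, prodAB A (fun j => B' (j - 1)) (m + 1)
      = A (m + 1) * prodBA A B' m * B' 0 := by
    intro m
    induction m with
    | zero => simp [prodAB, prodBA]
    | succ m ih =>
      show A (m + 2) * B' (m + 1) * prodAB A (fun j => B' (j - 1)) (m + 1) = _
      rw [ih]
      simp only [prodBA, Matrix.mul_assoc]
  have hprodBA : ∀ m : ℕ, ‖prodBA A B' m‖ ≤ max C c1 := by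
    intro m
    rcases Nat.eq_zero_or_pos m with h | h
    · subst h; exact le_max_of_le_right (le_of_eq rfl)
    · exact le_max_of_le_left (hbound m h)
  have ha0 : 0 ≤ a := le_trans (norm_nonneg _) (ha _ (hA 0))
  have hb0 : 0 ≤ b := le_trans (norm_nonneg _) (hb _ (hB' 0))
  refine ⟨a * max C c1 * b + 1, ?_, ?_⟩
  · have : 0 ≤ a * max C c1 * b :=
      mul_nonneg (mul_nonneg ha0 (le_trans hC.le (le_max_left _ _))) hb0
    linarith
  · intro n hn
    obtain ⟨m, rfl⟩ := Nat.exists_eq_add_of_le hn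
    rw [add_comm, key]
    have h1 : ‖A (m + 1) * prodBA A B' m * B' 0‖
        ≤ ‖A (m + 1) * prodBA A B' m‖ * ‖B' 0‖ := Matrix.linfty_opNorm_mul _ _
    have h2 : ‖A (m + 1) * prodBA A B' m‖ ≤ ‖A (m + 1)‖ * ‖prodBA A B' m‖ :=
      Matrix.linfty_opNorm_mul _ _
    have h3 : ‖A (m + 1) * prodBA A B' m‖ * ‖B' 0‖ ≤ (a * max C c1) * b := by
      apply mul_le_mul _ (hb _ (hB' 0)) (norm_nonneg _)
        (mul_nonneg ha0 (le_trans hC.le (le_max_left _ _)))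
      calc ‖A (m + 1) * prodBA A B' m‖ ≤ ‖A (m + 1)‖ * ‖prodBA A B' m‖ := h2
        _ ≤ a * max C c1 := mul_le_mul (ha _ (hA _)) (hprodBA m) (norm_nonneg _) ha0
    linarith
end

section
/- Let 𝒜 and ℬ be finite sets of matrices. Define, for finite tuples (A_i) ∈ 𝒜^n, (B_i) ∈ ℬ^n, ν_n((A_i),(B_i)) = max_{1≤k≤n} ‖A_k B_k ⋯ A_1 B_1‖, and μ_n(𝒜,ℬ) = max over (A_i) ∈ 𝒜^n of min over (B_i) ∈ ℬ^n of ν_n. For infinite sequences set ν_∞((A_i),(B_i)) = sup_{n≥1} ‖A_n B_n ⋯ A_1 B_1‖ and μ_∞(𝒜,ℬ) = sup over (A_i) ∈ 𝒜^∞ of inf over (B_i) ∈ ℬ^∞ of ν_∞. If sup_{n≥1} μ_n(𝒜,ℬ) ≤ C for some constant C > 0, then μ_∞(𝒜,ℬ) ≤ C. -/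
attribute [local instance] Matrix.linftyOpNormedAddCommGroup Matrix.linftyOpNormedRing

open scoped ENNReal

/-- `ν_n((A_i),(B_i)) = max_{1 ≤ k ≤ n} ‖A_k B_k ⋯ A_1 B_1‖` (in `ℝ≥0∞`). -/
noncomputable def nuN {N M : ℕ} (A : ℕ → Matrix (Fin N) (Fin M) ℝ)
    (B : ℕ → Matrix (Fin M) (Fin N) ℝ) (n : ℕ) : ℝ≥0∞ :=
  ⨆ k ∈ Finset.Icc 1 n, ENNReal.ofReal ‖prodAB A B k‖

/-- `ν_∞((A_i),(B_i)) = sup_{n ≥ 1} ‖A_n B_n ⋯ A_1 B_1‖` (in `ℝ≥0∞`). -/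
noncomputable def nuInf {N M : ℕ} (A : ℕ → Matrix (Fin N) (Fin M) ℝ)
    (B : ℕ → Matrix (Fin M) (Fin N) ℝ) : ℝ≥0∞ :=
  ⨆ n, ⨆ _ : 1 ≤ n, ENNReal.ofReal ‖prodAB A B n‖

/-- `μ_n(𝒜,ℬ) = max_{(A_i) ∈ 𝒜ⁿ} min_{(B_i) ∈ ℬⁿ} ν_n((A_i),(B_i))`
(as a sup-inf over sequences, since `ν_n` only depends on the first `n` terms). -/
noncomputable def muN {N M : ℕ} (𝒜 : Set (Matrix (Fin N) (Fin M) ℝ))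
    (ℬ : Set (Matrix (Fin M) (Fin N) ℝ)) (n : ℕ) : ℝ≥0∞ :=
  ⨆ A : {A : ℕ → Matrix (Fin N) (Fin M) ℝ // ∀ i, A i ∈ 𝒜},
    ⨅ B : {B : ℕ → Matrix (Fin M) (Fin N) ℝ // ∀ i, B i ∈ ℬ}, nuN A.1 B.1 n

/-- `μ_∞(𝒜,ℬ) = sup_{(A_i) ∈ 𝒜^∞} inf_{(B_i) ∈ ℬ^∞} ν_∞((A_i),(B_i))`. -/
noncomputable def muInf {N M : ℕ} (𝒜 : Set (Matrix (Fin N) (Fin M) ℝ))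
    (ℬ : Set (Matrix (Fin M) (Fin N) ℝ)) : ℝ≥0∞ :=
  ⨆ A : {A : ℕ → Matrix (Fin N) (Fin M) ℝ // ∀ i, A i ∈ 𝒜},
    ⨅ B : {B : ℕ → Matrix (Fin M) (Fin N) ℝ // ∀ i, B i ∈ ℬ}, nuInf A.1 B.1


lemma prodAB_congr {N M : ℕ} (A : ℕ → Matrix (Fin N) (Fin M) ℝ)
    {B B' : ℕ → Matrix (Fin M) (Fin N) ℝ} {k : ℕ}
    (h : ∀ i, 1 ≤ i → i ≤ k → B i = B' i) : prodAB A B k = prodAB A B' k := by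
  induction k with
  | zero => rfl
  | succ k ih =>
    rw [prodAB, prodAB, h (k + 1) (by omega) le_rfl,
      ih fun i h1 h2 => h i h1 (by omega)]

lemma nuN_congr {N M : ℕ} (A : ℕ → Matrix (Fin N) (Fin M) ℝ)
    {B B' : ℕ → Matrix (Fin M) (Fin N) ℝ} {n : ℕ}
    (h : ∀ i, 1 ≤ i → i ≤ n → B i = B' i) : nuN A B n = nuN A B' n := by
  unfold nuN
  refine biSup_congr fun k hk => ?_
  rw [Finset.mem_Icc] at hk
  rw [prodAB_congr A fun i h1 h2 => h i h1 (le_trans h2 hk.2)]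

lemma nuN_mono {N M : ℕ} (A : ℕ → Matrix (Fin N) (Fin M) ℝ)
    (B : ℕ → Matrix (Fin M) (Fin N) ℝ) {n m : ℕ} (hnm : n ≤ m) :
    nuN A B n ≤ nuN A B m := by
  unfold nuN
  exact biSup_mono fun k hk => Finset.Icc_subset_Icc_right hnm hk

/-- If `sup_{n ≥ 1} μ_n(𝒜,ℬ) ≤ C` for some constant `C > 0` (with `𝒜`, `ℬ`
finite), then `μ_∞(𝒜,ℬ) ≤ C`. -/
theorem stmt8 {N M : ℕ} (𝒜 : Set (Matrix (Fin N) (Fin M) ℝ))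
    (ℬ : Set (Matrix (Fin M) (Fin N) ℝ)) (h𝒜 : 𝒜.Finite) (hℬ : ℬ.Finite)
    (C : ℝ) (hC : 0 < C) (h : ∀ n, 1 ≤ n → muN 𝒜 ℬ n ≤ ENNReal.ofReal C) :
    muInf 𝒜 ℬ ≤ ENNReal.ofReal C := by
  rw [muInf]
  refine iSup_le fun A => ?_
  -- the B-sequence subtype is nonempty
  have hBne : Nonempty {B : ℕ → Matrix (Fin M) (Fin N) ℝ // ∀ i, B i ∈ ℬ} := by
    by_contra hne
    have hE : IsEmpty {B : ℕ → Matrix (Fin M) (Fin N) ℝ // ∀ i, B i ∈ ℬ} :=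
      not_nonempty_iff.mp hne
    have h1 := h 1 le_rfl
    rw [muN] at h1
    have : (⊤ : ℝ≥0∞) ≤ ENNReal.ofReal C := by
      refine le_trans ?_ h1
      refine le_trans ?_ (le_iSup _ A)
      rw [iInf_of_empty]
    exact ENNReal.ofReal_ne_top (top_le_iff.mp this)
  have : Finite {x // x ∈ ℬ} := hℬ.to_subtype
  -- for each n there is a minimizing B-sequence
  have key : ∀ n : ℕ, ∃ Bb : {B : ℕ → Matrix (Fin M) (Fin N) ℝ // ∀ i, B i ∈ ℬ},
      nuN A.1 Bb.1 n ≤ ENNReal.ofReal C := by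
    intro n
    rcases Nat.eq_zero_or_pos n with h0 | h1
    · obtain ⟨B0⟩ := hBne
      refine ⟨B0, ?_⟩
      subst h0
      simp [nuN]
    · have hinf : ⨅ B : {B : ℕ → Matrix (Fin M) (Fin N) ℝ // ∀ i, B i ∈ ℬ},
          nuN A.1 B.1 n ≤ ENNReal.ofReal C :=
        le_trans (le_iSup (fun A : {A : ℕ → Matrix (Fin N) (Fin M) ℝ // ∀ i, A i ∈ 𝒜} =>
          ⨅ B : {B : ℕ → Matrix (Fin M) (Fin N) ℝ // ∀ i, B i ∈ ℬ}, nuN A.1 B.1 n) A) (h n h1)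
      set f : {B : ℕ → Matrix (Fin M) (Fin N) ℝ // ∀ i, B i ∈ ℬ} → ℝ≥0∞ :=
        fun B => nuN A.1 B.1 n with hf
      have hfin : (Set.range f).Finite := by
        set g : (Fin (n + 1) → {x // x ∈ ℬ}) → ℝ≥0∞ := fun v =>
          nuN A.1 (fun i => if hi : i ≤ n then (v ⟨i, by omega⟩).1 else (v 0).1) n with hg
        have hsub : Set.range f ⊆ Set.range g := by
          rintro x ⟨B, rfl⟩
          refine ⟨fun j => ⟨B.1 j, B.2 j⟩, ?_⟩
          rw [hg, hf]
          refine nuN_congr A.1 fun i hi1 hi2 => ?_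
          simp [hi2]
        exact (Set.finite_range g).subset hsub
      have hne' : (Set.range f).Nonempty := Set.range_nonempty f
      have hmem := hne'.csInf_mem hfin
      obtain ⟨B, hB⟩ := hmem
      refine ⟨B, ?_⟩
      rw [hf] at hB
      calc nuN A.1 B.1 n = sInf (Set.range f) := hB
        _ = ⨅ B : {B : ℕ → Matrix (Fin M) (Fin N) ℝ // ∀ i, B i ∈ ℬ}, nuN A.1 B.1 n := by
            rw [sInf_range]
        _ ≤ ENNReal.ofReal C := hinf
  choose Bn hBn using key
  obtain ⟨U, hU⟩ := Ultrafilter.exists_le (Filter.atTop : Filter ℕ)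
  -- pick the ultrafilter-limit value at each coordinate
  have hpick : ∀ i : ℕ, ∃ b, b ∈ ℬ ∧ {n | (Bn n).1 i = b} ∈ U := by
    intro i
    have hU' : (⋃ b ∈ ℬ, {n | (Bn n).1 i = b}) ∈ U := by
      have : (⋃ b ∈ ℬ, {n | (Bn n).1 i = b}) = Set.univ := by
        ext n
        simp only [Set.mem_iUnion, Set.mem_setOf_eq, Set.mem_univ, iff_true]
        exact ⟨(Bn n).1 i, (Bn n).2 i, rfl⟩
      rw [this]
      exact Filter.univ_mem
    rcases (Ultrafilter.finite_biUnion_mem_iff hℬ).mp hU' with ⟨b, hb, hbU⟩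
    exact ⟨b, hb, hbU⟩
  choose Bf hBmem hBU using hpick
  -- the limit sequence works for every k
  have hbound : ∀ k, 1 ≤ k → nuN A.1 Bf k ≤ ENNReal.ofReal C := by
    intro k hk
    have h2 : {n | ∀ i ∈ Finset.Icc 1 k, (Bn n).1 i = Bf i} ∈ U := by
      have : (∀ᶠ n in (U : Filter ℕ), ∀ i ∈ Finset.Icc 1 k, (Bn n).1 i = Bf i) := by
        rw [Filter.eventually_all_finset]
        intro i _
        exact hBU i
      exact this
    have h1 : {n | k ≤ n} ∈ U := hU (Filter.mem_atTop k)
    obtain ⟨n, hn1, hn2⟩ := Filter.nonempty_of_mem (Filter.inter_mem h1 h2)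
    calc nuN A.1 Bf k = nuN A.1 (Bn n).1 k := by
          refine nuN_congr A.1 fun i hi1 hi2 => ?_
          exact (hn2 i (Finset.mem_Icc.mpr ⟨hi1, hi2⟩)).symm
      _ ≤ nuN A.1 (Bn n).1 n := nuN_mono A.1 (Bn n).1 hn1
      _ ≤ ENNReal.ofReal C := hBn n
  refine iInf_le_of_le ⟨Bf, hBmem⟩ ?_
  rw [nuInf]
  refine iSup_le fun n => iSup_le fun hn => ?_
  refine le_trans ?_ (hbound n hn)
  rw [nuN]
  exact le_iSup₂ (f := fun k (_ : k ∈ Finset.Icc 1 n) => ENNReal.ofReal ‖prodAB A.1 Bf k‖)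
    n (Finset.mem_Icc.mpr ⟨hn, le_rfl⟩)
end

section
/- With the notation of the previous item (ν_n, ν_∞, μ_n, μ_∞ for finite sets 𝒜, ℬ of matrices): if μ_∞(𝒜,ℬ) < ∞, then there exists a constant C > 0 such that μ_n(𝒜,ℬ) ≤ C for all n ≥ 1. Combined with the converse direction, μ_∞(𝒜,ℬ) < ∞ if and only if sup_{n≥1} μ_n(𝒜,ℬ) < ∞. -/
attribute [local instance] Matrix.linftyOpNormedAddCommGroup Matrix.linftyOpNormedRing

open scoped ENNReal

lemma nuN_le_nuInf {N M : ℕ} (A : ℕ → Matrix (Fin N) (Fin M) ℝ)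
    (B : ℕ → Matrix (Fin M) (Fin N) ℝ) (n : ℕ) : nuN A B n ≤ nuInf A B := by
  refine iSup₂_le fun k hk => ?_
  exact le_iSup₂ (f := fun n (_ : 1 ≤ n) => ENNReal.ofReal ‖prodAB A B n‖) k
    (Finset.mem_Icc.mp hk).1

lemma muN_le_muInf {N M : ℕ} (𝒜 : Set (Matrix (Fin N) (Fin M) ℝ))
    (ℬ : Set (Matrix (Fin M) (Fin N) ℝ)) (n : ℕ) : muN 𝒜 ℬ n ≤ muInf 𝒜 ℬ :=
  iSup_mono fun A => iInf_mono fun B => nuN_le_nuInf A.1 B.1 n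

/-- The key compactness (König) step. -/
lemma muInf_le_sup_muN {N M : ℕ} (𝒜 : Set (Matrix (Fin N) (Fin M) ℝ))
    (ℬ : Set (Matrix (Fin M) (Fin N) ℝ)) (hℬ : ℬ.Finite)
    (hS : (⨆ n, ⨆ _ : 1 ≤ n, muN 𝒜 ℬ n) < ⊤) :
    muInf 𝒜 ℬ ≤ ⨆ n, ⨆ _ : 1 ≤ n, muN 𝒜 ℬ n := by
  set S := ⨆ n, ⨆ _ : 1 ≤ n, muN 𝒜 ℬ n with hSdef
  rw [muInf]
  refine iSup_le fun Ap => ?_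
  obtain ⟨A, hA⟩ := Ap
  by_cases hne : ℬ.Nonempty
  · -- main case
    obtain ⟨B0, hB0⟩ := hne
    refine ENNReal.le_of_forall_pos_le_add fun ε hε hStop => ?_
    set T := S + (ε : ℝ≥0∞) with hTdef
    have hT : T ≠ ⊤ := ENNReal.add_ne_top.mpr ⟨hStop.ne, ENNReal.coe_ne_top⟩
    have hST : S < T := ENNReal.lt_add_right hStop.ne (by exact_mod_cast hε.ne')
    -- for every n there is a B-sequence good up to time n
    have hex : ∀ n, ∃ B : {B : ℕ → Matrix (Fin M) (Fin N) ℝ // ∀ i, B i ∈ ℬ},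
        nuN A B.1 n ≤ T := by
      intro n
      match n with
      | 0 =>
        refine ⟨⟨fun _ => B0, fun _ => hB0⟩, ?_⟩
        refine iSup₂_le fun k hk => absurd (Finset.mem_Icc.mp hk) (by omega)
      | (m + 1) =>
        have h1 : (⨅ B : {B : ℕ → Matrix (Fin M) (Fin N) ℝ // ∀ i, B i ∈ ℬ},
            nuN A B.1 (m + 1)) ≤ muN 𝒜 ℬ (m + 1) :=
          le_iSup (fun A' : {A : ℕ → Matrix (Fin N) (Fin M) ℝ // ∀ i, A i ∈ 𝒜} =>
            ⨅ B : {B : ℕ → Matrix (Fin M) (Fin N) ℝ // ∀ i, B i ∈ ℬ},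
              nuN A'.1 B.1 (m + 1)) ⟨A, hA⟩
        have h2 : muN 𝒜 ℬ (m + 1) ≤ S :=
          le_iSup₂ (f := fun n (_ : 1 ≤ n) => muN 𝒜 ℬ n) (m + 1) (Nat.succ_le_succ (Nat.zero_le _))
        have h3 := lt_of_le_of_lt (h1.trans h2) hST
        obtain ⟨B, hB⟩ := iInf_lt_iff.mp h3
        exact ⟨B, hB.le⟩
    -- compactness setup
    haveI : Fintype ↥ℬ := hℬ.fintype
    letI : TopologicalSpace ↥ℬ := ⊥
    haveI : DiscreteTopology ↥ℬ := ⟨rfl⟩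
    haveI : CompactSpace ↥ℬ := Finite.compactSpace
    set g : (ℕ → ↥ℬ) → (ℕ → Matrix (Fin M) (Fin N) ℝ) :=
      fun B i => (B i : Matrix (Fin M) (Fin N) ℝ) with hg
    have hc : ∀ k, Continuous fun B : ℕ → ↥ℬ => prodAB A (g B) k := by
      intro k
      induction k with
      | zero => exact continuous_const
      | succ m ih =>
        show Continuous fun B : ℕ → ↥ℬ => A (m + 1) * g B (m + 1) * prodAB A (g B) m
        exact (continuous_const.matrix_mul
          (continuous_of_discreteTopology.comp (continuous_apply (m + 1)))).matrix_mul ih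
    set V : ℕ → Set (ℕ → ↥ℬ) := fun n =>
      {B | ∀ k ∈ Finset.Icc 1 n, ENNReal.ofReal ‖prodAB A (g B) k‖ ≤ T} with hV
    have hmono : ∀ n, V (n + 1) ⊆ V n := by
      intro n B hB k hk
      exact hB k (Finset.Icc_subset_Icc_right (Nat.le_succ n) hk)
    have hnon : ∀ n, (V n).Nonempty := by
      intro n
      obtain ⟨⟨B, hB⟩, hBn⟩ := hex n
      refine ⟨fun i => ⟨B i, hB i⟩, fun k hk => ?_⟩
      have : ENNReal.ofReal ‖prodAB A B k‖ ≤ T :=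
        le_trans (le_iSup₂ (f := fun k (_ : k ∈ Finset.Icc 1 n) =>
          ENNReal.ofReal ‖prodAB A B k‖) k hk) hBn
      exact this
    have hclosed : ∀ n, IsClosed (V n) := by
      intro n
      have : V n = ⋂ k ∈ Finset.Icc 1 n, {B : ℕ → ↥ℬ | ‖prodAB A (g B) k‖ ≤ T.toReal} := by
        ext B
        simp only [hV, Set.mem_setOf_eq, Set.mem_iInter,
          ENNReal.ofReal_le_iff_le_toReal hT]
      rw [this]
      exact isClosed_biInter fun k _ => isClosed_le (hc k).norm continuous_const
    have hcompact : IsCompact (V 0) := (hclosed 0).isCompact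
    obtain ⟨B, hB⟩ := IsCompact.nonempty_iInter_of_sequence_nonempty_isCompact_isClosed
      V hmono hnon hcompact hclosed
    have hBmem := Set.mem_iInter.mp hB
    refine le_trans (iInf_le (fun B' : {B : ℕ → Matrix (Fin M) (Fin N) ℝ // ∀ i, B i ∈ ℬ} =>
      nuInf A B'.1) ⟨g B, fun i => (B i).2⟩) ?_
    exact iSup₂_le fun n hn => hBmem n n (Finset.mem_Icc.mpr ⟨hn, le_rfl⟩)
  · -- ℬ empty : contradiction with hS
    exfalso
    haveI : IsEmpty {B : ℕ → Matrix (Fin M) (Fin N) ℝ // ∀ i, B i ∈ ℬ} :=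
      ⟨fun b => hne ⟨b.1 0, b.2 0⟩⟩
    have hmu1 : muN 𝒜 ℬ 1 = ⊤ := by
      rw [muN]
      haveI : Nonempty {A' : ℕ → Matrix (Fin N) (Fin M) ℝ // ∀ i, A' i ∈ 𝒜} := ⟨⟨A, hA⟩⟩
      simp [iInf_of_empty]
    have : (⊤ : ℝ≥0∞) ≤ S := by
      rw [← hmu1]
      exact le_iSup₂ (f := fun n (_ : 1 ≤ n) => muN 𝒜 ℬ n) 1 le_rfl
    exact absurd hS (by simp [top_le_iff.mp this])

/-- If `μ_∞(𝒜,ℬ) < ∞` (with `𝒜`, `ℬ` finite), then there is a constant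
`C > 0` bounding all `μ_n(𝒜,ℬ)`, `n ≥ 1`; combined with the converse
direction, `μ_∞(𝒜,ℬ) < ∞` iff `sup_{n ≥ 1} μ_n(𝒜,ℬ) < ∞`. -/
theorem stmt9 {N M : ℕ} (𝒜 : Set (Matrix (Fin N) (Fin M) ℝ))
    (ℬ : Set (Matrix (Fin M) (Fin N) ℝ)) (h𝒜 : 𝒜.Finite) (hℬ : ℬ.Finite) :
    (muInf 𝒜 ℬ < ⊤ →
      ∃ C : ℝ, 0 < C ∧ ∀ n, 1 ≤ n → muN 𝒜 ℬ n ≤ ENNReal.ofReal C) ∧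
    (muInf 𝒜 ℬ < ⊤ ↔ (⨆ n, ⨆ _ : 1 ≤ n, muN 𝒜 ℬ n) < ⊤) := by
  constructor
  · intro h
    refine ⟨(muInf 𝒜 ℬ).toReal + 1, by positivity, fun n _ => ?_⟩
    calc muN 𝒜 ℬ n ≤ muInf 𝒜 ℬ := muN_le_muInf 𝒜 ℬ n
      _ ≤ ENNReal.ofReal ((muInf 𝒜 ℬ).toReal + 1) := by
          conv_lhs => rw [← ENNReal.ofReal_toReal h.ne]
          exact ENNReal.ofReal_le_ofReal (by linarith)
  · constructor
    · intro h
      exact lt_of_le_of_lt (iSup_le fun n => iSup_le fun _ => muN_le_muInf 𝒜 ℬ n) h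
    · intro hS
      exact lt_of_le_of_lt (muInf_le_sup_muN 𝒜 ℬ hℬ hS) hS
end
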